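/- Let G be a finite signed graph whose maximum vertex degree Δ (in the underlying graph with edge set E⁺ ∪ E⁻) satisfies Δ ≥ 1. Suppose G₁ = G[V₁] is an induced subgraph of G that is balanced and has the maximum number of vertices among all balanced induced subgraphs of G, and G₂ = G[V₂] is an induced subgraph of G that is balanced and has the maximum number of edges among all balanced induced subgraphs of G. Then |V₂| ≥ |V₁| / Δ; that is, the solution to the edge-maximization problem MBS-E is a (1/Δ)-approximation for the vertex-maximization problem MBS-V. -/

import Mathlib

noncomputable section

/-- A finite signed graph: disjoint finite sets of positive and negative
edges (unordered pairs of distinct vertices) on a vertex type `V`. -/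
structure SignedGraph (V : Type*) where
  Epos : Set (Sym2 V)
  Eneg : Set (Sym2 V)
  finite : (Epos ∪ Eneg).Finite
  disj : Disjoint Epos Eneg
  loopless : ∀ e ∈ Epos ∪ Eneg, ¬ e.IsDiag

namespace SignedGraph

variable {V : Type*}

/-- The set of all edges `E⁺ ∪ E⁻`. -/
def edges (G : SignedGraph V) : Set (Sym2 V) := G.Epos ∪ G.Eneg

/-- `|E⁺ ∪ E⁻|`, the number of edges. -/
def numEdges (G : SignedGraph V) : ℕ := G.edges.ncard

/-- The underlying (unsigned) simple graph. -/
def underlying (G : SignedGraph V) : SimpleGraph V :=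
  SimpleGraph.fromEdgeSet G.edges

/-- A signed graph is connected if its underlying simple graph is connected. -/
def Connected (G : SignedGraph V) : Prop := G.underlying.Connected

/-- An edge is frustrated under a coloring `x : V → Bool` if it is positive and
its endpoints receive different colors, or negative and its endpoints receive
the same color. -/
def IsFrustrated (G : SignedGraph V) (x : V → Bool) (e : Sym2 V) : Prop :=
  (e ∈ G.Epos ∧ ∀ a b, e = s(a, b) → x a ≠ x b) ∨
  (e ∈ G.Eneg ∧ ∀ a b, e = s(a, b) → x a = x b)

/-- The set of edges frustrated under the coloring `x`. -/
def frustratedEdges (G : SignedGraph V) (x : V → Bool) : Set (Sym2 V) :=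
  {e | G.IsFrustrated x e}

/-- `f(G,x)`: the number of edges frustrated under the coloring `x`. -/
def frustCount (G : SignedGraph V) (x : V → Bool) : ℕ :=
  (G.frustratedEdges x).ncard

/-- A signed graph is balanced if it is connected and the vertices can be
partitioned into two classes (the fibers of a two-coloring) so that every
positive edge joins vertices in the same class and every negative edge joins
vertices in different classes. -/
def Balanced (G : SignedGraph V) : Prop :=
  G.Connected ∧ ∃ x : V → Bool,
    (∀ e ∈ G.Epos, ∀ a b, e = s(a, b) → x a = x b) ∧
    (∀ e ∈ G.Eneg, ∀ a b, e = s(a, b) → x a ≠ x b)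

/-- Delete a set `F` of edges from a signed graph. -/
def deleteEdges (G : SignedGraph V) (F : Set (Sym2 V)) : SignedGraph V where
  Epos := G.Epos \ F
  Eneg := G.Eneg \ F
  finite := G.finite.subset (Set.union_subset_union Set.diff_subset Set.diff_subset)
  disj := G.disj.mono Set.diff_subset Set.diff_subset
  loopless := fun e he =>
    G.loopless e (Set.union_subset_union Set.diff_subset Set.diff_subset he)

/-- The induced signed subgraph on a set `S` of vertices. -/
def induce (G : SignedGraph V) (S : Set V) : SignedGraph S where
  Epos := {e : Sym2 S | e.map Subtype.val ∈ G.Epos}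
  Eneg := {e : Sym2 S | e.map Subtype.val ∈ G.Eneg}
  finite := by
    have h : {e : Sym2 S | e.map Subtype.val ∈ G.Epos} ∪
        {e : Sym2 S | e.map Subtype.val ∈ G.Eneg} =
        Sym2.map (Subtype.val : S → V) ⁻¹' (G.Epos ∪ G.Eneg) := by
      ext e; simp [Set.mem_union, Set.mem_preimage]
    rw [h]
    exact G.finite.preimage ((Sym2.map.injective Subtype.val_injective).injOn)
  disj := by
    rw [Set.disjoint_left]
    intro e he₁ he₂
    exact Set.disjoint_left.mp G.disj he₁ he₂
  loopless := by
    intro e he hdiag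
    have hmem : e.map (Subtype.val : S → V) ∈ G.Epos ∪ G.Eneg := by
      rcases he with h | h
      · exact Or.inl h
      · exact Or.inr h
    apply G.loopless _ hmem
    induction e using Sym2.ind with
    | _ a b =>
      rw [Sym2.mk_isDiag_iff] at hdiag
      rw [Sym2.map_pair_eq, Sym2.mk_isDiag_iff]
      exact congrArg _ hdiag

/-- Every connected component of the signed graph is balanced (as the induced
signed subgraph on the component's vertex set). -/
def ComponentsBalanced (G : SignedGraph V) : Prop :=
  ∀ c : G.underlying.ConnectedComponent, (G.induce c.supp).Balanced

/-- The frustration index `L(G)`: the minimum number of edges whose deletion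
makes every connected component of the remaining graph balanced. -/
def frustrationIndex (G : SignedGraph V) : ℕ :=
  sInf {k | ∃ F ⊆ G.edges, F.ncard = k ∧ (G.deleteEdges F).ComponentsBalanced}

/-- The Tolerant Balance Index `Φ(G, β) = |E⁺ ∪ E⁻| − L(G)/β`. -/
def TBI (G : SignedGraph V) (β : ℝ) : ℝ :=
  (G.numEdges : ℝ) - (G.frustrationIndex : ℝ) / β

/-- The Tolerant Balance Count `Φ̂(G, β, x) = |E⁺ ∪ E⁻| − f(G,x)/β`. -/
def TBC (G : SignedGraph V) (β : ℝ) (x : V → Bool) : ℝ :=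
  (G.numEdges : ℝ) - (G.frustCount x : ℝ) / β

/-- `G` is balanced under `β`-tolerance: `G` is connected and
`L(G) ≤ β·|E⁺ ∪ E⁻|`. -/
def BalancedWithTolerance (G : SignedGraph V) (β : ℝ) : Prop :=
  G.Connected ∧ (G.frustrationIndex : ℝ) ≤ β * (G.numEdges : ℝ)

end SignedGraph

/-- The degree of a vertex in the underlying graph: the number of edges of
`E⁺ ∪ E⁻` containing it. -/
def SignedGraph.degree {V : Type*} (G : SignedGraph V) (v : V) : ℕ :=
  {e ∈ G.edges | v ∈ e}.ncard

/-!
A balanced subgraph is connected, so `G[V₁]` has at least `|V₁| - 1` edges; by maximality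
of `G[V₂]` it has at most as many edges as `G[V₂]`, and by the handshake lemma `G[V₂]` has
at most `Δ|V₂|/2` edges. Hence `|V₁| ≤ ⌊Δ|V₂|/2⌋ + 1 ≤ Δ|V₂|`, as `Δ|V₂| ≥ 1`.
-/

namespace SignedGraph

variable {V W : Type*}

lemma edgeSet_underlying (G : SignedGraph V) : G.underlying.edgeSet = G.edges := by
  rw [underlying, SimpleGraph.edgeSet_fromEdgeSet]
  exact sdiff_eq_left.mpr (Set.disjoint_left.mpr fun e he hdiag => G.loopless e he hdiag)

lemma numEdges_eq_card_edgeSet (G : SignedGraph V) :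
    G.numEdges = Nat.card G.underlying.edgeSet := by
  rw [numEdges, edgeSet_underlying, Nat.card_coe_set_eq]

lemma degree_eq_ncard_incidenceSet (G : SignedGraph V) (v : V) :
    G.degree v = (G.underlying.incidenceSet v).ncard := by
  rw [degree, SimpleGraph.incidenceSet, edgeSet_underlying]

lemma Connected.card_le_numEdges_add_one {H : SignedGraph W} (h : H.Connected) :
    Nat.card W ≤ H.numEdges + 1 := by
  rw [numEdges_eq_card_edgeSet]
  exact SimpleGraph.Connected.card_vert_le_card_edgeSet_add_one h

lemma two_mul_numEdges_le [Finite W] (H : SignedGraph W) {Δ : ℕ}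
    (hΔ : ∀ v, H.degree v ≤ Δ) :
    2 * H.numEdges ≤ Δ * Nat.card W := by
  classical
  have := Fintype.ofFinite W
  calc 2 * H.numEdges = ∑ v, H.underlying.degree v := by
        rw [SimpleGraph.sum_degrees_eq_twice_card_edges, numEdges_eq_card_edgeSet,
          Nat.card_eq_fintype_card, SimpleGraph.edgeFinset_card]
    _ ≤ ∑ _v : W, Δ := Finset.sum_le_sum fun v _ => by
        rw [← SimpleGraph.card_incidenceSet_eq_degree, ← Nat.card_eq_fintype_card,
          Nat.card_coe_set_eq, ← degree_eq_ncard_incidenceSet]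
        exact hΔ v
    _ = Δ * Nat.card W := by simp [mul_comm]

lemma degree_induce_le (G : SignedGraph V) (S : Set V) (v : S) :
    (G.induce S).degree v ≤ G.degree v := by
  refine Set.ncard_le_ncard_of_injOn (Sym2.map Subtype.val) ?_
    (Sym2.map.injective Subtype.val_injective).injOn (G.finite.subset (Set.sep_subset _ _))
  rintro e ⟨he, hv⟩
  exact ⟨he, Sym2.mem_map.mpr ⟨v, hv, rfl⟩⟩

end SignedGraph

theorem SignedGraph.mbsE_approx_mbsV_general {V : Type*} [Fintype V] (G : SignedGraph V)
    (Δ : ℕ) (hΔmax : IsGreatest (Set.range G.degree) Δ) (hΔ : 1 ≤ Δ)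
    (V₁ V₂ : Set V)
    (h₁bal : (G.induce V₁).Balanced)
    (h₂bal : (G.induce V₂).Balanced)
    (h₂max : ∀ S : Set V, (G.induce S).Balanced →
      (G.induce S).numEdges ≤ (G.induce V₂).numEdges) :
    (V₁.ncard : ℝ) / (Δ : ℝ) ≤ (V₂.ncard : ℝ) := by
  have hV₁ : V₁.ncard ≤ (G.induce V₁).numEdges + 1 := by
    simpa only [Nat.card_coe_set_eq] using h₁bal.1.card_le_numEdges_add_one
  have hV₂ : 2 * (G.induce V₂).numEdges ≤ Δ * V₂.ncard := by
    simpa only [Nat.card_coe_set_eq] using (G.induce V₂).two_mul_numEdges_le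
      fun v => (G.degree_induce_le V₂ v).trans (hΔmax.2 ⟨v, rfl⟩)
  have hV₂pos : 0 < V₂.ncard :=
    (Set.ncard_pos).mpr (Set.nonempty_coe_sort.mp h₂bal.1.nonempty)
  have key : V₁.ncard ≤ Δ * V₂.ncard := by
    have hm := h₂max V₁ h₁bal
    have hΔV₂ := Nat.mul_le_mul hΔ hV₂pos
    omega
  rw [div_le_iff₀ (by exact_mod_cast hΔ)]
  exact_mod_cast key.trans_eq (mul_comm _ _)

/-- If `Δ ≥ 1` is the maximum vertex degree of a finite signed
graph `G`, `G[V₁]` is a balanced induced subgraph with the maximum number of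
vertices, and `G[V₂]` is a balanced induced subgraph with the maximum number of
edges, then `|V₂| ≥ |V₁|/Δ`: the MBS-E optimum is a `(1/Δ)`-approximation for
MBS-V. -/
theorem SignedGraph.mbsE_approx_mbsV {V : Type*} [Fintype V] (G : SignedGraph V)
    (Δ : ℕ) (hΔmax : IsGreatest (Set.range G.degree) Δ) (hΔ : 1 ≤ Δ)
    (V₁ V₂ : Set V)
    (h₁bal : (G.induce V₁).Balanced)
    (h₁max : ∀ S : Set V, (G.induce S).Balanced → S.ncard ≤ V₁.ncard)
    (h₂bal : (G.induce V₂).Balanced)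
    (h₂max : ∀ S : Set V, (G.induce S).Balanced →
      (G.induce S).numEdges ≤ (G.induce V₂).numEdges) :
    (V₁.ncard : ℝ) / (Δ : ℝ) ≤ (V₂.ncard : ℝ) :=
  SignedGraph.mbsE_approx_mbsV_general G Δ hΔmax hΔ V₁ V₂ h₁bal h₂bal h₂max
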